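/- arXiv:1003.5782 — 4 statements merged into one kernel-verified Lean document; each statement's English description precedes it below -/
import Mathlib

section
/- Let G be a bi-critical, non-bipartite r-graph (r ≥ 3) containing no non-trivial odd vertex set X with |∂(X)| = r (non-trivial means |X| ≠ 1 and |X| ≠ |V(G)|−1). Then G is 3-vertex-connected, and hence a brick. -/
/-- A multigraph on vertex type `V` with edge type `E`: each edge has a pair of endpoints. -/
structure Multigraph (V E : Type) where
  ends : E → Sym2 V

namespace Multigraph

variable {V E : Type}

/-- No loops: no edge has equal endpoints. -/
def Loopless (G : Multigraph V E) : Prop := ∀ e, ¬ (G.ends e).IsDiag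

/-- The degree of a vertex: the number of edges incident with it. -/
noncomputable def degree (G : Multigraph V E) (v : V) : ℕ := Nat.card {e | v ∈ G.ends e}

/-- The edge cut `∂(X)`: edges with exactly one end in `X`. -/
def cut (G : Multigraph V E) (X : Set V) : Set E :=
  {e | ∃ u ∈ X, ∃ w ∉ X, G.ends e = s(u, w)}

/-- The underlying simple graph. -/
def toSimple (G : Multigraph V E) : SimpleGraph V where
  Adj u w := u ≠ w ∧ ∃ e, G.ends e = s(u, w)
  symm := by
    constructor
    rintro u w ⟨h, e, he⟩
    exact ⟨h.symm, e, by rw [he, Sym2.eq_swap]⟩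
  loopless := by constructor; rintro u ⟨h, _⟩; exact h rfl

/-- Connectivity of a multigraph. -/
def Connected (G : Multigraph V E) : Prop := G.toSimple.Connected

/-- `M` is a perfect matching on the vertex set `A`: every edge of `M` has both ends
in `A` and every vertex of `A` is covered by exactly one edge of `M`. -/
def IsPerfectMatchingOn (G : Multigraph V E) (A : Set V) (M : Set E) : Prop :=
  (∀ e ∈ M, ∀ v ∈ G.ends e, v ∈ A) ∧ ∀ v ∈ A, ∃! e, e ∈ M ∧ v ∈ G.ends e

/-- A perfect matching of `G`. -/
def IsPerfectMatching (G : Multigraph V E) (M : Set E) : Prop :=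
  G.IsPerfectMatchingOn Set.univ M

/-- `θ(G−S)`: the number of odd components of `G − S`. -/
noncomputable def theta (G : Multigraph V E) (S : Set V) : ℕ :=
  Nat.card {c : (G.toSimple.induce Sᶜ).ConnectedComponent // Odd (Nat.card c.supp)}

/-- A barrier: a vertex set `S` with `θ(G−S) = |S|`. -/
def IsBarrier (G : Multigraph V E) (S : Set V) : Prop := G.theta S = Nat.card S

/-- Bi-critical: deleting any two distinct vertices leaves a graph with a perfect matching. -/
def Bicritical (G : Multigraph V E) : Prop :=
  ∀ u v : V, u ≠ v → ∃ M, G.IsPerfectMatchingOn {u, v}ᶜ M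

/-- Bipartite multigraph. -/
def Bipartite (G : Multigraph V E) : Prop := G.toSimple.Colorable 2

/-- `k`-vertex-connected: deleting fewer than `k` vertices leaves a connected graph. -/
def VertexConnected (G : Multigraph V E) (k : ℕ) : Prop :=
  ∀ S : Set V, Nat.card S < k → (G.toSimple.induce Sᶜ).Connected

/-- A brick: non-bipartite, bi-critical and 3-vertex-connected. -/
def IsBrick (G : Multigraph V E) : Prop :=
  ¬ G.Bipartite ∧ G.Bicritical ∧ G.VertexConnected 3

/-- A proper edge coloring with `k` colors exists. -/
def EdgeColorable (G : Multigraph V E) (k : ℕ) : Prop :=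
  ∃ c : E → Fin k, ∀ e f, e ≠ f → (∃ v, v ∈ G.ends e ∧ v ∈ G.ends f) → c e ≠ c f

/-- A non-trivial odd vertex set: odd cardinality, different from `1` and `|V|−1`. -/
def NontrivialOdd (_G : Multigraph V E) (X : Set V) : Prop :=
  Odd (Nat.card X) ∧ Nat.card X ≠ 1 ∧ Nat.card X ≠ Nat.card V - 1

/-- An `r`-graph: a connected loopless `r`-regular multigraph in which every odd
vertex set has at least `r` edges leaving it. -/
def IsRGraph (G : Multigraph V E) (r : ℕ) : Prop :=
  G.Loopless ∧ G.Connected ∧ (∀ v, G.degree v = r) ∧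
    ∀ X : Set V, Odd (Nat.card X) → r ≤ Nat.card (G.cut X)

open Classical in
/-- The projection identifying the complement of `X` to a single new vertex. -/
noncomputable def proj (X : Set V) (v : V) : ↥X ⊕ Unit :=
  if h : v ∈ X then .inl ⟨v, h⟩ else .inr ()

/-- Contract the complement of `X` to a single vertex, deleting the resulting loops
(i.e. the edges with both ends outside `X`) but keeping multiplicities. -/
noncomputable def contract (G : Multigraph V E) (X : Set V) :
    Multigraph (↥X ⊕ Unit) {e // ¬ ((G.ends e).map (proj X)).IsDiag} where
  ends e := (G.ends e.1).map (proj X)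

/-- The spanning sub-multigraph with edge set `A`. -/
def restrict (G : Multigraph V E) (A : Set E) : Multigraph V ↥A where
  ends e := G.ends e.1

open Classical in
/-- Expansion: replace every vertex `v` by a cycle `C_v` of length `2k+1` in which every
edge has multiplicity `k`; the `2k+1` old edges at `v` are attached to the `2k+1` distinct
vertices of `C_v` according to the bijection `φ v`. -/
noncomputable def expand (H : Multigraph V E) (k : ℕ)
    (φ : (v : V) → {e // v ∈ H.ends e} ≃ ZMod (2 * k + 1)) :
    Multigraph (V × ZMod (2 * k + 1)) (E ⊕ V × ZMod (2 * k + 1) × Fin k) where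
  ends := fun e => match e with
    | .inl e => (H.ends e).map (fun v => (v, if h : v ∈ H.ends e then φ v ⟨e, h⟩ else 0))
    | .inr (v, i, _) => s((v, i), (v, i + 1))

end Multigraph

/-!
Bicriticality makes every union of components of `G - u - v` even, since a perfect matching
of `G - u - v` restricts to it; as `|V|` is even, this rules out cut vertices. If `{u, v}`
separates `X` from `Y`, then `X + u` and `X + v` are odd, and the edges at `u` and `v` give
`|∂(X + u)| + |∂(X + v)| = d(u) + d(v) = 2r`. Both cuts have at least `r` edges, so
`|∂(X + u)| = r`, and `X + u` is non-trivial because `X` and `Y` are even and nonempty.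
-/

namespace Multigraph

variable {V E : Type} (G : Multigraph V E)

def incidenceSet (v : V) : Set E := {e | v ∈ G.ends e}

theorem degree_eq_ncard_incidenceSet (v : V) : G.degree v = (G.incidenceSet v).ncard :=
  Nat.card_coe_set_eq _

theorem mem_cut_iff {X : Set V} {e : E} {a b : V} (h : G.ends e = s(a, b)) :
    e ∈ G.cut X ↔ (a ∈ X ↔ b ∉ X) := by
  simp only [cut, Set.mem_ofPred_eq, h, Sym2.eq_iff]
  constructor
  · rintro ⟨x, hx, y, hy, ⟨rfl, rfl⟩ | ⟨rfl, rfl⟩⟩ <;> tauto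
  · intro hab
    by_cases ha : a ∈ X
    · exact ⟨a, ha, b, hab.1 ha, .inl ⟨rfl, rfl⟩⟩
    · exact ⟨b, not_not.1 (mt hab.2 ha), a, ha, .inr ⟨rfl, rfl⟩⟩

variable {G}

theorem Loopless.ne (hl : G.Loopless) {e : E} {a b : V} (h : G.ends e = s(a, b)) : a ≠ b := by
  rintro rfl
  exact hl e (h ▸ Sym2.mk_isDiag_iff.2 rfl)

theorem ncard_cut_insert_add_ncard_cut_insert [Finite E] (hl : G.Loopless) {X : Set V} {u v : V}
    (huv : u ≠ v) (huX : u ∉ X) (hvX : v ∉ X)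
    (hX : G.cut X ⊆ G.incidenceSet u ∪ G.incidenceSet v) :
    (G.cut (insert u X)).ncard + (G.cut (insert v X)).ncard =
      (G.incidenceSet u).ncard + (G.incidenceSet v).ncard := by
  have key : ∀ e, (e ∈ G.cut (insert u X) ∨ e ∈ G.cut (insert v X) ↔
      e ∈ G.incidenceSet u ∨ e ∈ G.incidenceSet v) ∧
      (e ∈ G.cut (insert u X) ∧ e ∈ G.cut (insert v X) ↔
      e ∈ G.incidenceSet u ∧ e ∈ G.incidenceSet v) := by
    intro e
    obtain ⟨a, b, h⟩ := Sym2.exists.1 ⟨G.ends e, rfl⟩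
    have hab := hl.ne h
    have he : e ∈ G.cut X → e ∈ G.incidenceSet u ∪ G.incidenceSet v := @hX e
    simp only [Set.mem_union, incidenceSet, Set.mem_ofPred_eq, h, Sym2.mem_iff, G.mem_cut_iff h,
      Set.mem_insert_iff] at he ⊢
    grind
  have hunion : G.cut (insert u X) ∪ G.cut (insert v X) = G.incidenceSet u ∪ G.incidenceSet v :=
    Set.ext fun e => (key e).1
  have hinter : G.cut (insert u X) ∩ G.cut (insert v X) = G.incidenceSet u ∩ G.incidenceSet v :=
    Set.ext fun e => (key e).2
  rw [← Set.ncard_union_add_ncard_inter, hunion, hinter, Set.ncard_union_add_ncard_inter]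

@[simps]
def matchingSubgraph (G : Multigraph V E) (A : Set V) (M : Set E) : G.toSimple.Subgraph where
  verts := A
  Adj a b := a ≠ b ∧ a ∈ A ∧ b ∈ A ∧ ∃ e ∈ M, G.ends e = s(a, b)
  adj_sub := fun ⟨hab, _, _, e, _, he⟩ => ⟨hab, e, he⟩
  edge_vert h := h.2.1
  symm := ⟨fun _ _ ⟨hab, ha, hb, e, heM, he⟩ =>
    ⟨hab.symm, hb, ha, e, heM, he.trans Sym2.eq_swap⟩⟩

theorem IsPerfectMatchingOn.isMatching_matchingSubgraph {A : Set V} {M : Set E}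
    (hl : G.Loopless) (hM : G.IsPerfectMatchingOn A M) : (G.matchingSubgraph A M).IsMatching := by
  intro a ha
  simp only [matchingSubgraph_verts, matchingSubgraph_adj] at ha ⊢
  obtain ⟨e, ⟨heM, hae⟩, huniq⟩ := hM.2 a ha
  obtain ⟨b, hab⟩ := Sym2.mem_iff_exists.1 hae
  refine ⟨b, ⟨hl.ne hab, ha, hM.1 e heM b (hab ▸ Sym2.mem_mk_right a b), e, heM, hab⟩, ?_⟩
  rintro c ⟨-, -, -, f, hfM, hac⟩
  rw [huniq f ⟨hfM, hac ▸ Sym2.mem_mk_left a c⟩, hab] at hac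
  exact (Sym2.congr_right.1 hac).symm

theorem IsPerfectMatchingOn.even_ncard [Finite V] {A : Set V} {M : Set E} (hl : G.Loopless)
    (hM : G.IsPerfectMatchingOn A M) : Even A.ncard := by
  have : Fintype (G.matchingSubgraph A M).verts := Fintype.ofFinite _
  have h := (hM.isMatching_matchingSubgraph hl).even_card
  rwa [← Set.ncard_eq_toFinset_card'] at h

theorem IsPerfectMatchingOn.restrict {A X : Set V} {M : Set E} (hM : G.IsPerfectMatchingOn A M)
    (hXA : X ⊆ A) (hMX : Disjoint M (G.cut X)) :
    G.IsPerfectMatchingOn X {e | e ∈ M ∧ ∃ x ∈ X, x ∈ G.ends e} := by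
  refine ⟨?_, fun v hv => ?_⟩
  · rintro e ⟨heM, x, hx, hxe⟩ v hve
    obtain ⟨w, hxw⟩ := Sym2.mem_iff_exists.1 hxe
    have hw : w ∈ X := by
      by_contra hw
      exact hMX.notMem_of_mem_left heM ⟨x, hx, w, hw, hxw⟩
    rw [hxw, Sym2.mem_iff] at hve
    rcases hve with rfl | rfl
    exacts [hx, hw]
  · obtain ⟨e, ⟨heM, hve⟩, huniq⟩ := hM.2 v (hXA hv)
    exact ⟨e, ⟨⟨heM, v, hv, hve⟩, hve⟩, fun f hf => huniq f ⟨hf.1.1, hf.2⟩⟩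

/-- `X` is a union of components of `G - S`, neither empty nor all of `G - S`. -/
structure Separates (G : Multigraph V E) (S X : Set V) : Prop where
  nonempty : X.Nonempty
  nonempty_compl : (X ∪ S)ᶜ.Nonempty
  disjoint : Disjoint X S
  mem_of_leaves : ∀ e a b, G.ends e = s(a, b) → a ∈ X → b ∉ X → b ∈ S

theorem Separates.compl {S X : Set V} (h : G.Separates S X) : G.Separates S (X ∪ S)ᶜ where
  nonempty := h.nonempty_compl
  nonempty_compl := by
    obtain ⟨x, hx⟩ := h.nonempty
    exact ⟨x, by simp [hx, h.disjoint.notMem_of_mem_left hx]⟩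
  disjoint := disjoint_compl_left.mono_right Set.subset_union_right
  mem_of_leaves e a b hab ha hb := by
    simp only [Set.mem_compl_iff, Set.mem_union, not_or] at ha hb
    by_contra hbS
    have hbX : b ∈ X := by_contra fun hbX => hb ⟨hbX, hbS⟩
    exact ha.2 (h.mem_of_leaves e b a (by rw [hab, Sym2.eq_swap]) hbX ha.1)

theorem Separates.cut_subset {S X : Set V} (h : G.Separates S X) :
    G.cut X ⊆ ⋃ s ∈ S, G.incidenceSet s := by
  rintro e ⟨a, ha, b, hb, hab⟩
  exact Set.mem_biUnion (h.mem_of_leaves e a b hab ha hb) (by simp [incidenceSet, hab])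

theorem exists_separates_of_not_connected {S : Set V} (hS : Sᶜ.Nonempty)
    (h : ¬ (G.toSimple.induce Sᶜ).Connected) : ∃ X, G.Separates S X := by
  have : Nonempty ↥Sᶜ := hS.to_subtype
  obtain ⟨x, y, hxy⟩ : ∃ x y : ↥Sᶜ, ¬ (G.toSimple.induce Sᶜ).Reachable x y := by
    by_contra! h'
    exact h ⟨h'⟩
  refine ⟨Subtype.val '' {z | (G.toSimple.induce Sᶜ).Reachable x z},
    ⟨x, x, .rfl, rfl⟩, ⟨y, ?_⟩, ?_, ?_⟩
  · rintro (⟨z, hz, hzy⟩ | hy)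
    exacts [hxy (Subtype.val_injective hzy ▸ hz), y.2 hy]
  · exact Set.disjoint_left.2 fun _ ⟨z, _, hz⟩ => hz ▸ z.2
  · rintro e a b hab ⟨a, ha, rfl⟩ hb
    by_contra hbS
    have hadj : (G.toSimple.induce Sᶜ).Adj a ⟨b, hbS⟩ :=
      ⟨fun h => hb ⟨a, ha, h⟩, e, hab⟩
    exact hb ⟨_, ha.trans hadj.reachable, rfl⟩

theorem Connected.not_separates_empty (hG : G.Connected) (X : Set V) : ¬ G.Separates ∅ X := by
  intro h
  obtain ⟨x, hx⟩ := h.nonempty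
  obtain ⟨y, hy⟩ := h.nonempty_compl
  obtain ⟨p⟩ := hG.preconnected x y
  obtain ⟨d, -, hd, hd'⟩ := p.exists_boundary_dart X hx (by simpa using hy)
  obtain ⟨-, e, he⟩ := d.adj
  exact h.mem_of_leaves e _ _ he hd hd'

theorem Separates.ncard_add_ncard_compl_add [Finite V] {S X : Set V} (h : G.Separates S X) :
    X.ncard + (X ∪ S)ᶜ.ncard + S.ncard = Nat.card V := by
  rw [add_right_comm, ← Set.ncard_union_eq h.disjoint, Set.ncard_add_ncard_compl]

theorem Bicritical.even_card [Finite V] (hbi : G.Bicritical) (hl : G.Loopless) {u v : V}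
    (huv : u ≠ v) : Even (Nat.card V) := by
  obtain ⟨M, hM⟩ := hbi u v huv
  rw [← Set.ncard_add_ncard_compl {u, v}, Set.ncard_pair huv]
  exact even_two.add (hM.even_ncard hl)

theorem Bicritical.even_ncard [Finite V] (hbi : G.Bicritical) (hl : G.Loopless) {u v : V}
    (huv : u ≠ v) {X : Set V} (huX : u ∉ X) (hvX : v ∉ X)
    (hcut : G.cut X ⊆ G.incidenceSet u ∪ G.incidenceSet v) : Even X.ncard := by
  obtain ⟨M, hM⟩ := hbi u v huv
  have hX : X ⊆ {u, v}ᶜ := by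
    rintro x hx (rfl | rfl)
    exacts [huX hx, hvX hx]
  refine (hM.restrict hX (Set.disjoint_left.2 fun e heM he => ?_)).even_ncard hl
  rcases hcut he with hu | hv
  exacts [hM.1 e heM u hu (.inl rfl), hM.1 e heM v hv (.inr rfl)]

theorem Bicritical.not_separates_singleton [Finite V] (hbi : G.Bicritical) (hl : G.Loopless)
    (u : V) (X : Set V) : ¬ G.Separates {u} X := by
  intro h
  obtain ⟨v, hv⟩ := h.nonempty_compl
  obtain ⟨w, hw⟩ := h.nonempty
  simp only [Set.mem_compl_iff, Set.mem_union, Set.mem_singleton_iff, not_or] at hv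
  have hcut : ∀ {Z : Set V}, G.Separates {u} Z → ∀ t,
      G.cut Z ⊆ G.incidenceSet u ∪ G.incidenceSet t :=
    fun hZ t => by simpa using hZ.cut_subset.trans Set.subset_union_left
  have huX : u ∉ X := fun hu => h.disjoint.notMem_of_mem_left hu rfl
  have hX : Even X.ncard := hbi.even_ncard hl (Ne.symm hv.2) huX hv.1 (hcut h v)
  have hY : Even (X ∪ {u})ᶜ.ncard :=
    hbi.even_ncard hl (ne_of_mem_of_not_mem hw huX).symm (by simp) (by simp [hw]) (hcut h.compl w)
  have hV := hbi.even_card hl (Ne.symm hv.2)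
  rw [← h.ncard_add_ncard_compl_add, Set.ncard_singleton] at hV
  grind

theorem IsRGraph.exists_nontrivialOdd_of_separates_pair [Finite V] [Finite E] {r : ℕ}
    (hG : G.IsRGraph r) (hbi : G.Bicritical) {u v : V} (huv : u ≠ v) {X : Set V}
    (h : G.Separates {u, v} X) : ∃ Z : Set V, G.NontrivialOdd Z ∧ Nat.card (G.cut Z) = r := by
  obtain ⟨hl, -, hdeg, hodd⟩ := hG
  have huX : u ∉ X := fun hu => h.disjoint.notMem_of_mem_left hu (.inl rfl)
  have hvX : v ∉ X := fun hv => h.disjoint.notMem_of_mem_left hv (.inr rfl)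
  have hcut : ∀ {Z : Set V}, G.Separates {u, v} Z →
      G.cut Z ⊆ G.incidenceSet u ∪ G.incidenceSet v :=
    fun hZ => by simpa using hZ.cut_subset
  have hX : Even X.ncard := hbi.even_ncard hl huv huX hvX (hcut h)
  have hY : Even (X ∪ {u, v})ᶜ.ncard := hbi.even_ncard hl huv (by simp) (by simp) (hcut h.compl)
  have hsum := ncard_cut_insert_add_ncard_cut_insert hl huv huX hvX (hcut h)
  rw [← degree_eq_ncard_incidenceSet, ← degree_eq_ncard_incidenceSet, hdeg, hdeg,
    ← Nat.card_coe_set_eq, ← Nat.card_coe_set_eq] at hsum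
  have hXu : Nat.card ↥(insert u X) = X.ncard + 1 := by
    rw [Nat.card_coe_set_eq, Set.ncard_insert_of_notMem huX]
  have hXv : Nat.card ↥(insert v X) = X.ncard + 1 := by
    rw [Nat.card_coe_set_eq, Set.ncard_insert_of_notMem hvX]
  have hcutu := hodd (insert u X) (hXu ▸ hX.add_one)
  have hcutv := hodd (insert v X) (hXv ▸ hX.add_one)
  have hV := h.ncard_add_ncard_compl_add
  have hXpos := (Set.ncard_pos).2 h.nonempty
  have hYpos := (Set.ncard_pos).2 h.nonempty_compl
  rw [Set.ncard_pair huv] at hV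
  refine ⟨insert u X, ⟨hXu ▸ hX.add_one, ?_, ?_⟩, by omega⟩ <;> grind

theorem bipartite_of_card_le_two [Finite V] (h : Nat.card V ≤ 2) : G.Bipartite := by
  have : Fintype V := Fintype.ofFinite V
  exact G.toSimple.colorable_of_fintype.mono (Nat.card_eq_fintype_card (α := V) ▸ h)

end Multigraph

theorem brick_theorem_general {V E : Type} [Fintype V] [Fintype E]
    (G : Multigraph V E) (r : ℕ) (hG : G.IsRGraph r)
    (hbi : G.Bicritical) (hnb : ¬ G.Bipartite)
    (hno : ¬ ∃ X : Set V, G.NontrivialOdd X ∧ Nat.card (G.cut X) = r) :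
    G.VertexConnected 3 ∧ G.IsBrick := by
  have hV : 3 ≤ Nat.card V := by
    by_contra! hV
    exact hnb (G.bipartite_of_card_le_two (by omega))
  have h3 : G.VertexConnected 3 := by
    intro S hS
    rw [Nat.card_coe_set_eq] at hS
    by_contra hS'
    have hSc : Sᶜ.Nonempty := Set.nonempty_of_ncard_ne_zero (by
      have := Set.ncard_add_ncard_compl S
      omega)
    obtain ⟨X, hX⟩ := Multigraph.exists_separates_of_not_connected hSc hS'
    interval_cases hSn : S.ncard
    · rw [Set.ncard_eq_zero] at hSn
      exact hG.2.1.not_separates_empty X (hSn ▸ hX)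
    · obtain ⟨u, rfl⟩ := Set.ncard_eq_one.1 hSn
      exact hbi.not_separates_singleton hG.1 u X hX
    · obtain ⟨u, v, huv, rfl⟩ := Set.ncard_eq_two.1 hSn
      exact hno (hG.exists_nontrivialOdd_of_separates_pair hbi huv hX)
  exact ⟨h3, hnb, hbi, h3⟩

/-- A bi-critical non-bipartite r-graph (r ≥ 3) with no non-trivial odd set
X with |∂(X)| = r is 3-vertex-connected, and hence a brick. -/
theorem brick_theorem {V E : Type} [Fintype V] [Fintype E]
    (G : Multigraph V E) (r : ℕ) (hr : 3 ≤ r) (hG : G.IsRGraph r)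
    (hbi : G.Bicritical) (hnb : ¬ G.Bipartite)
    (hno : ¬ ∃ X : Set V, G.NontrivialOdd X ∧ Nat.card (G.cut X) = r) :
    G.VertexConnected 3 ∧ G.IsBrick :=
  brick_theorem_general G r hG hbi hnb hno
end

section
/- Let G be an r-graph, X a non-trivial odd vertex set with |∂(X)| = r, and let G₁, G₂ be obtained by contracting V(G)∖X and X respectively. If G₁ and G₂ are each (r+1)-edge-colorable, then G is (r+1)-edge-colorable. -/
/-!
Colour the edges meeting `X` as in `G.contract X` and the edges meeting `Xᶜ` as in
`G.contract Xᶜ`. The only edges coloured twice are those of the cut `∂(X)`; in each contraction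
they all meet the contracted vertex, so each colouring is injective on the cut, and after
permuting the colours of the second colouring the two agree there. Two edges meeting at a vertex
of `X` are then separated by the first colouring and two edges meeting outside `X` by the second.
Looplessness is what makes every edge of `G` survive in at least one of the contractions.
-/

namespace Multigraph

variable {V E : Type} {G : Multigraph V E} {X : Set V}

lemma proj_of_mem {v : V} (hv : v ∈ X) : proj X v = .inl ⟨v, hv⟩ := dif_pos hv

lemma proj_of_notMem {v : V} (hv : v ∉ X) : proj X v = .inr () := dif_neg hv

lemma eq_of_proj_eq {u w : V} (hu : u ∈ X) (h : proj X u = proj X w) : u = w := by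
  by_cases hw : w ∈ X
  · simpa [proj_of_mem hu, proj_of_mem hw] using h
  · simp [proj_of_mem hu, proj_of_notMem hw] at h

lemma mem_map_proj {z : Sym2 V} {v : V} (hv : v ∈ z) : proj X v ∈ z.map (proj X) :=
  Sym2.mem_map.2 ⟨v, hv, rfl⟩

lemma not_isDiag_map_proj_iff {z : Sym2 V} (hz : ¬ z.IsDiag) :
    ¬ (z.map (proj X)).IsDiag ↔ ∃ v ∈ z, v ∈ X := by
  induction z using Sym2.ind with
  | h u w =>
    rw [Sym2.mk_isDiag_iff] at hz
    rw [Sym2.map_mk, Sym2.mk_isDiag_iff]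
    constructor
    · intro h
      by_contra! hout
      exact h <| by
        rw [proj_of_notMem (hout u (Sym2.mem_mk_left u w)),
          proj_of_notMem (hout w (Sym2.mem_mk_right u w))]
    · rintro ⟨v, hv, hvX⟩ h
      rcases Sym2.mem_iff.1 hv with rfl | rfl
      · exact hz (eq_of_proj_eq hvX h)
      · exact hz (eq_of_proj_eq hvX h.symm).symm

lemma Loopless.not_isDiag_map_proj (hG : G.Loopless) {e : E} {v : V} (hv : v ∈ G.ends e)
    (hvX : v ∈ X) : ¬ ((G.ends e).map (proj X)).IsDiag :=
  (not_isDiag_map_proj_iff (hG e)).2 ⟨v, hv, hvX⟩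

lemma mem_cut_iff_s10 {e : E} :
    e ∈ G.cut X ↔ (∃ u ∈ G.ends e, u ∈ X) ∧ ∃ w ∈ G.ends e, w ∉ X := by
  constructor
  · rintro ⟨u, hu, w, hw, he⟩
    rw [he]
    exact ⟨⟨u, Sym2.mem_mk_left u w, hu⟩, w, Sym2.mem_mk_right u w, hw⟩
  · rintro ⟨⟨u, hue, hu⟩, w, hwe, hw⟩
    exact ⟨u, hu, w, hw, (Sym2.mem_and_mem_iff (ne_of_mem_of_not_mem hu hw)).1 ⟨hue, hwe⟩⟩

lemma cut_compl : G.cut Xᶜ = G.cut X := by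
  ext e
  simp only [mem_cut_iff_s10, Set.mem_compl_iff, not_not]
  exact and_comm

lemma not_isDiag_map_proj_of_mem_cut {e : E} (he : e ∈ G.cut X) :
    ¬ ((G.ends e).map (proj X)).IsDiag := by
  obtain ⟨u, hu, w, hw, he⟩ := he
  rw [he, Sym2.map_mk, Sym2.mk_isDiag_iff, proj_of_mem hu, proj_of_notMem hw]
  exact Sum.inl_ne_inr

/-- In an edge colouring of `G.contract X` the cut edges all meet the contracted vertex. -/
lemma injective_cut_of_contract {k : ℕ}
    {c : {e // ¬ ((G.ends e).map (proj X)).IsDiag} → Fin k}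
    (hc : ∀ e f, e ≠ f → (∃ x, x ∈ (G.contract X).ends e ∧ x ∈ (G.contract X).ends f) →
      c e ≠ c f) :
    Function.Injective fun e : G.cut X => c ⟨e, not_isDiag_map_proj_of_mem_cut e.2⟩ := by
  intro e f hef
  by_contra hne
  obtain ⟨-, w, hwe, hw⟩ := mem_cut_iff_s10.1 e.2
  obtain ⟨-, w', hwf, hw'⟩ := mem_cut_iff_s10.1 f.2
  refine hc _ _ (fun h => hne (Subtype.ext (Subtype.mk.inj h))) ⟨.inr (), ?_, ?_⟩ hef
  · rw [← proj_of_notMem hw]; exact mem_map_proj hwe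
  · rw [← proj_of_notMem hw']; exact mem_map_proj hwf

theorem Loopless.edgeColorable_of_contract {k : ℕ} (hG : G.Loopless)
    (h₁ : (G.contract X).EdgeColorable k) (h₂ : (G.contract Xᶜ).EdgeColorable k) :
    G.EdgeColorable k := by
  classical
  obtain ⟨c₁, hc₁⟩ := h₁
  obtain ⟨c₂, hc₂⟩ := h₂
  have : Finite (G.cut X) := .of_injective _ (injective_cut_of_contract hc₁)
  obtain ⟨σ, hσ⟩ := Equiv.Perm.exists_extending_pair
    (fun e : G.cut X => c₂ ⟨e, not_isDiag_map_proj_of_mem_cut (cut_compl.symm ▸ e.2)⟩)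
    (fun e : G.cut X => c₁ ⟨e, not_isDiag_map_proj_of_mem_cut e.2⟩)
    ((injective_cut_of_contract hc₂).comp (Equiv.setCongr cut_compl.symm).injective)
    (injective_cut_of_contract hc₁)
  let c : E → Fin k := fun e =>
    if h : ∃ v ∈ G.ends e, v ∈ X then c₁ ⟨e, (not_isDiag_map_proj_iff (hG e)).2 h⟩
    else σ (c₂ ⟨e, hG.not_isDiag_map_proj (X := Xᶜ) (Sym2.out_fst_mem _)
      fun hX => h ⟨_, Sym2.out_fst_mem _, hX⟩⟩)
  have hc_in {e : E} {v : V} (hv : v ∈ G.ends e) (hvX : v ∈ X) :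
      c e = c₁ ⟨e, hG.not_isDiag_map_proj hv hvX⟩ :=
    dif_pos ⟨v, hv, hvX⟩
  have hc_out {e : E} {v : V} (hv : v ∈ G.ends e) (hvX : v ∉ X) :
      c e = σ (c₂ ⟨e, hG.not_isDiag_map_proj (X := Xᶜ) hv hvX⟩) := by
    by_cases h : ∃ u ∈ G.ends e, u ∈ X
    · have hcut : e ∈ G.cut X := mem_cut_iff_s10.2 ⟨h, v, hv, hvX⟩
      exact (dif_pos h).trans (hσ ⟨e, hcut⟩).symm
    · exact dif_neg h
  refine ⟨c, fun e f hne ⟨v, hve, hvf⟩ => ?_⟩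
  have hne_edge {Y : Set V} {he hf} :
      (⟨e, he⟩ : {e // ¬ ((G.ends e).map (proj Y)).IsDiag}) ≠ ⟨f, hf⟩ :=
    fun h => hne (congrArg Subtype.val h)
  by_cases hv : v ∈ X
  · rw [hc_in hve hv, hc_in hvf hv]
    exact hc₁ _ _ hne_edge ⟨proj X v, mem_map_proj hve, mem_map_proj hvf⟩
  · rw [hc_out hve hv, hc_out hvf hv]
    exact σ.injective.ne (hc₂ _ _ hne_edge ⟨proj Xᶜ v, mem_map_proj hve, mem_map_proj hvf⟩)

end Multigraph

theorem contract_edgeColorable_general {V E : Type}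
    (G : Multigraph V E) (r : ℕ) (hG : G.IsRGraph r)
    (X : Set V)
    (h1 : (G.contract X).EdgeColorable (r + 1))
    (h2 : (G.contract Xᶜ).EdgeColorable (r + 1)) :
    G.EdgeColorable (r + 1) :=
  hG.1.edgeColorable_of_contract h1 h2

/-- If both contractions G₁ (of V∖X) and G₂ (of X) are (r+1)-edge-colorable,
then so is G. -/
theorem contract_edgeColorable {V E : Type} [Fintype V] [Fintype E]
    (G : Multigraph V E) (r : ℕ) (hG : G.IsRGraph r)
    (X : Set V) (hX : G.NontrivialOdd X) (hcut : Nat.card (G.cut X) = r)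
    (h1 : (G.contract X).EdgeColorable (r + 1))
    (h2 : (G.contract Xᶜ).EdgeColorable (r + 1)) :
    G.EdgeColorable (r + 1) :=
  contract_edgeColorable_general G r hG X h1 h2
end

section
/- If every r-graph contains 2r perfect matchings such that each edge belongs to exactly two of them, then every r-graph contains 2r perfect matchings such that any three of them have empty common intersection. -/
theorem Set.inter_inter_eq_empty_of_ncard_le_two {α ι : Type*} [Finite ι] {F : ι → Set α}
    (hF : ∀ a, {i | a ∈ F i}.ncard ≤ 2) {i j l : ι} (hij : i ≠ j) (hil : i ≠ l)
    (hjl : j ≠ l) : F i ∩ F j ∩ F l = ∅ := by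
  refine Set.eq_empty_of_forall_notMem fun a ⟨⟨hi, hj⟩, hl⟩ => ?_
  have hsub : ({i, j, l} : Set ι) ⊆ {i | a ∈ F i} := by
    rintro x (rfl | rfl | rfl) <;> assumption
  have hthree : ({i, j, l} : Set ι).ncard = 3 :=
    Set.ncard_eq_three.mpr ⟨i, j, l, hij, hil, hjl, rfl⟩
  have hcard := (Set.ncard_le_ncard hsub).trans (hF a)
  omega

/-- If every r-graph has 2r perfect matchings covering each edge exactly
twice, then every r-graph has 2r perfect matchings any three of which have empty
intersection. -/
theorem doubleCover_implies_triple_empty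
    (hBF : ∀ (V E : Type) [Fintype V] [Fintype E] (G : Multigraph V E) (r : ℕ),
      G.IsRGraph r →
        ∃ F : Fin (2 * r) → Set E, (∀ i, G.IsPerfectMatching (F i)) ∧
          ∀ e : E, Nat.card {i : Fin (2 * r) | e ∈ F i} = 2) :
    ∀ (V E : Type) [Fintype V] [Fintype E] (G : Multigraph V E) (r : ℕ),
      G.IsRGraph r →
        ∃ F : Fin (2 * r) → Set E, (∀ i, G.IsPerfectMatching (F i)) ∧
          ∀ i j l : Fin (2 * r), i ≠ j → i ≠ l → j ≠ l →
            F i ∩ F j ∩ F l = ∅ := by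
  intro V E _ _ G r hG
  obtain ⟨F, hF, hcover⟩ := hBF V E G r hG
  have hle : ∀ e, {i | e ∈ F i}.ncard ≤ 2 := fun e => by
    rw [← Nat.card_coe_set_eq, hcover e]
  exact ⟨F, hF, fun _ _ _ => Set.inter_inter_eq_empty_of_ncard_le_two hle⟩
end

section
/- If G is a matching covered graph and S is a maximal barrier, then every component of G−S is factor-critical. -/
/-! Write `θ(X)` for the number of odd components of `G - X`. Deleting one more vertex destroys
at most one odd component, and `θ(X) ≡ |X| (mod 2)` once `|V|` is even (which a barrier forces),
so any `X` with `|X| ≤ θ(X)` grows, one vertex at a time, into a barrier. If a component `C` of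
`G - S` had a vertex `u` and a Tutte violator `T` of `C - u`, then `|S ∪ {u} ∪ T| ≤ θ(S ∪ {u} ∪ T)`,
giving a barrier strictly larger than `S`. So `C - u` satisfies Tutte's condition and has a
perfect matching. -/

namespace SimpleGraph

variable {V W : Type*} (H : SimpleGraph V)

/-- The vertex sets of the connected components of `H.induce A`, kept inside `Set V` so that
components of different induced subgraphs can be compared. -/
def IsComponentIn (A D : Set V) : Prop :=
  Maximal (fun s => s ⊆ A ∧ (H.induce s).Connected) D

def oddComponentsIn (A : Set V) : Set (Set V) :=
  {D | H.IsComponentIn A D ∧ Odd D.ncard}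

variable {H}

namespace IsComponentIn

variable {A B C D : Set V}

theorem subset (hD : H.IsComponentIn A D) : D ⊆ A := hD.prop.1

theorem connected (hD : H.IsComponentIn A D) : (H.induce D).Connected := hD.prop.2

theorem nonempty (hD : H.IsComponentIn A D) : D.Nonempty :=
  Set.nonempty_coe_sort.mp hD.connected.nonempty

theorem subset_of_inter_nonempty (hC : H.IsComponentIn A C) (hB : B ⊆ A)
    (hBconn : (H.induce B).Connected) (hCB : (C ∩ B).Nonempty) : B ⊆ C := by
  have hunion := induce_union_connected hC.connected.preconnected hBconn.preconnected hCB
  exact Set.union_subset_iff.mp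
    (hC.le_of_ge ⟨Set.union_subset hC.subset hB, hunion⟩ Set.subset_union_left) |>.2

theorem eq_of_inter_nonempty (hC : H.IsComponentIn A C) (hD : H.IsComponentIn A D)
    (hCD : (C ∩ D).Nonempty) : C = D :=
  (hD.subset_of_inter_nonempty hC.subset hC.connected (Set.inter_comm C D ▸ hCD)).antisymm
    (hC.subset_of_inter_nonempty hD.subset hD.connected hCD)

theorem mono (hD : H.IsComponentIn A D) (hDB : D ⊆ B) (hBA : B ⊆ A) : H.IsComponentIn B D :=
  Maximal.mono hD (fun _ hs => ⟨hs.1.trans hBA, hs.2⟩) ⟨hDB, hD.connected⟩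

theorem of_diff {X : Set V} (hC : H.IsComponentIn A C) (hD : H.IsComponentIn (C \ X) D) :
    H.IsComponentIn (A \ X) D := by
  refine ⟨⟨hD.subset.trans (Set.sdiff_subset_sdiff_left hC.subset), hD.connected⟩, ?_⟩
  rintro t ⟨htA, htconn⟩ hDt
  obtain ⟨d, hd⟩ := hD.nonempty
  have htC : t ⊆ C := hC.subset_of_inter_nonempty (htA.trans Set.sdiff_subset) htconn
    ⟨d, (hD.subset hd).1, hDt hd⟩
  exact hD.le_of_ge ⟨fun x hx => ⟨htC hx, (htA hx).2⟩, htconn⟩ hDt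

end IsComponentIn

variable {K : SimpleGraph W}

theorem Embedding.range_induce (A : Set V) : Set.range (Embedding.induce (G := H) A) = A :=
  Subtype.range_coe

theorem Embedding.connected_induce_image_iff (f : K ↪g H) (s : Set W) :
    (H.induce (f '' s)).Connected ↔ (K.induce s).Connected := by
  have hrange : Set.range (f.comp (Embedding.induce s)) = f '' s := by
    rw [Embedding.coe_comp, Set.range_comp, Embedding.range_induce]
  rw [(f.comp (Embedding.induce s)).isoInduceRange.connected_iff, hrange]

theorem Embedding.isComponentIn_range_image_iff (f : K ↪g H) (s : Set W) :
    H.IsComponentIn (Set.range f) (f '' s) ↔ Maximal (fun t => (K.induce t).Connected) s := by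
  simp only [IsComponentIn, Maximal, f.connected_induce_image_iff, Set.image_subset_range,
    true_and]
  refine and_congr_right fun _ => ⟨fun h t ht hst => ?_, fun h t ht hst => ?_⟩
  · simpa [Set.image_subset_image_iff f.injective] using
      h ⟨Set.image_subset_range f t, (f.connected_induce_image_iff t).mpr ht⟩
        (Set.image_mono hst)
  · obtain ⟨u, rfl⟩ : ∃ u, t = f '' u := ⟨_, (Set.image_preimage_eq_of_subset ht.1).symm⟩
    exact Set.image_mono (h ((f.connected_induce_image_iff _).mp ht.2)
      ((Set.image_subset_image_iff f.injective).mp hst))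

theorem Embedding.ncard_oddComponents_eq (f : K ↪g H) :
    K.oddComponents.ncard = (H.oddComponentsIn (Set.range f)).ncard := by
  have himage : (fun c => f '' c.supp) '' K.oddComponents = H.oddComponentsIn (Set.range f) := by
    ext D
    constructor
    · rintro ⟨c, hc, rfl⟩
      exact ⟨(f.isComponentIn_range_image_iff _).mpr
        ((ConnectedComponent.maximal_connected_induce_iff _).mpr ⟨c, rfl⟩),
        by rwa [Set.ncard_image_of_injective _ f.injective]⟩
    · rintro ⟨hD, hodd⟩
      obtain ⟨s, rfl⟩ : ∃ s, D = f '' s := ⟨_, (Set.image_preimage_eq_of_subset hD.subset).symm⟩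
      obtain ⟨c, hc⟩ := (ConnectedComponent.maximal_connected_induce_iff _).mp
        ((f.isComponentIn_range_image_iff _).mp hD)
      refine ⟨c, ?_, congrArg (f '' ·) hc⟩
      rwa [Set.ncard_image_of_injective _ f.injective, ← hc] at hodd
  rw [← himage, Set.ncard_image_of_injective]
  exact (Set.image_injective.mpr f.injective).comp ConnectedComponent.supp_injective

theorem ncard_oddComponents_induce (A : Set V) :
    (H.induce A).oddComponents.ncard = (H.oddComponentsIn A).ncard := by
  rw [(Embedding.induce A).ncard_oddComponents_eq, Embedding.range_induce]

theorem isComponentIn_image_supp {A : Set V} (c : (H.induce A).ConnectedComponent) :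
    H.IsComponentIn A (Subtype.val '' c.supp) := by
  have := (Embedding.induce (G := H) A).isComponentIn_range_image_iff c.supp
  rw [Embedding.range_induce] at this
  exact this.mpr ((ConnectedComponent.maximal_connected_induce_iff _).mpr ⟨c, rfl⟩)

theorem odd_ncard_oddComponentsIn_iff [Finite V] (A : Set V) :
    Odd (H.oddComponentsIn A).ncard ↔ Odd A.ncard := by
  rw [← ncard_oddComponents_induce, odd_ncard_oddComponents, Nat.card_coe_set_eq]

theorem ncard_oddComponentsIn_add_le [Finite V] {A C X : Set V} (hC : H.IsComponentIn A C)
    (hXC : X ⊆ C) :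
    (H.oddComponentsIn A).ncard + (H.oddComponentsIn (C \ X)).ncard ≤
      (H.oddComponentsIn (A \ X)).ncard + 1 := by
  have hsplit := Set.ncard_le_ncard_sdiff_add_ncard (H.oddComponentsIn A) {C}
  rw [Set.ncard_singleton] at hsplit
  have hdisj : Disjoint (H.oddComponentsIn A \ {C}) (H.oddComponentsIn (C \ X)) := by
    refine Set.disjoint_left.mpr fun D ⟨⟨hD, _⟩, hDC⟩ ⟨hD', _⟩ => hDC ?_
    obtain ⟨d, hd⟩ := hD'.nonempty
    exact hD.eq_of_inter_nonempty hC ⟨d, hd, (hD'.subset hd).1⟩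
  have hsub : H.oddComponentsIn A \ {C} ∪ H.oddComponentsIn (C \ X) ⊆
      H.oddComponentsIn (A \ X) := by
    rintro D (⟨⟨hD, hodd⟩, hDC⟩ | ⟨hD, hodd⟩)
    · have hDX : Disjoint D X := Set.disjoint_of_subset_right hXC <|
        Set.disjoint_iff_inter_eq_empty.mpr <| Set.not_nonempty_iff_eq_empty.mp
          fun h => hDC (hD.eq_of_inter_nonempty hC h)
      exact ⟨hD.mono (fun d hd => ⟨hD.subset hd, hDX.notMem_of_mem_left hd⟩) Set.sdiff_subset,
        hodd⟩
    · exact ⟨hC.of_diff hD, hodd⟩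
  have := Set.ncard_le_ncard hsub
  rw [Set.ncard_union_eq hdisj] at this
  omega

theorem exists_isPerfectMatching_induce [Finite V] {A : Set V}
    (h : ∀ T ⊆ A, (H.oddComponentsIn (A \ T)).ncard ≤ T.ncard) :
    ∃ M : (H.induce A).Subgraph, M.IsPerfectMatching := by
  refine tutte.mpr fun u hu => ?_
  let f : ((⊤ : (H.induce A).Subgraph).deleteVerts u).coe ↪g H :=
    { toFun := fun x => x.1.1
      inj' := fun x y hxy => Subtype.ext (Subtype.ext hxy)
      map_rel_iff' := fun {x y} => by
        change H.Adj x.1.1 y.1.1 ↔ _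
        simp [x.2.2, y.2.2] }
  have hrange : Set.range f = A \ Subtype.val '' u := by
    ext x
    constructor
    · rintro ⟨⟨y, -, hyu⟩, rfl⟩
      exact ⟨y.2, fun ⟨z, hz, hzy⟩ => hyu (Subtype.ext (a2 := y) hzy ▸ hz)⟩
    · rintro ⟨hxA, hxu⟩
      exact ⟨⟨⟨x, hxA⟩, trivial, fun hx => hxu ⟨_, hx, rfl⟩⟩, rfl⟩
  have hle := h (Subtype.val '' u) (Subtype.coe_image_subset A u)
  rw [IsTutteViolator, f.ncard_oddComponents_eq, hrange,
    ← Set.ncard_image_of_injective u Subtype.val_injective] at hu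
  omega

variable (H) in
def IsBarrier (S : Set V) : Prop := (H.oddComponentsIn Sᶜ).ncard = S.ncard

theorem even_ncard_oddComponentsIn_compl_add_iff [Finite V] (X : Set V) :
    Even ((H.oddComponentsIn Xᶜ).ncard + X.ncard) ↔ Even (Nat.card V) := by
  rw [← Set.ncard_add_ncard_compl X, Nat.even_add, Nat.even_add, ← Nat.not_odd_iff_even,
    odd_ncard_oddComponentsIn_iff, Nat.not_odd_iff_even]
  exact Iff.comm

theorem IsBarrier.even_card [Finite V] {S : Set V} (hS : H.IsBarrier S) : Even (Nat.card V) := by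
  rw [← even_ncard_oddComponentsIn_compl_add_iff S, hS]
  exact ⟨_, rfl⟩

theorem exists_isBarrier_superset [Finite V] (heven : Even (Nat.card V)) {X : Set V}
    (hX : X.ncard ≤ (H.oddComponentsIn Xᶜ).ncard) : ∃ Y, X ⊆ Y ∧ H.IsBarrier Y := by
  obtain ⟨n, hn⟩ : ∃ n, Xᶜ.ncard = n := ⟨_, rfl⟩
  induction n using Nat.strong_induction_on generalizing X with | _ n ih => ?_
  by_cases hbar : H.IsBarrier X
  · exact ⟨X, subset_rfl, hbar⟩
  have hpar := (even_ncard_oddComponentsIn_compl_add_iff (H := H) X).mpr heven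
  have hgap : X.ncard + 2 ≤ (H.oddComponentsIn Xᶜ).ncard := by
    rw [Nat.even_iff] at hpar
    unfold IsBarrier at hbar
    omega
  obtain ⟨D, hD, -⟩ := Set.nonempty_of_ncard_ne_zero (s := H.oddComponentsIn Xᶜ) (by omega)
  obtain ⟨x, hxD⟩ := hD.nonempty
  have hxX : x ∉ X := hD.subset hxD
  have hcompl : Xᶜ \ {x} = (insert x X)ᶜ := by
    ext y
    simp [and_comm]
  have hstep := ncard_oddComponentsIn_add_le hD (Set.singleton_subset_iff.mpr hxD)
  rw [hcompl] at hstep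
  have hcard := Set.ncard_insert_of_notMem hxX
  obtain ⟨Y, hXY, hY⟩ := ih (insert x X)ᶜ.ncard
    (by rw [← hn, ← hcompl]; exact Set.ncard_sdiff_singleton_lt_of_mem hxX) (by omega) rfl
  exact ⟨Y, (Set.subset_insert x X).trans hXY, hY⟩

theorem IsComponentIn.ncard_oddComponentsIn_le_of_maximal_isBarrier [Finite V] {S C : Set V}
    (hS : Maximal H.IsBarrier S) (hC : H.IsComponentIn Sᶜ C) {u : V} (hu : u ∈ C)
    {T : Set V} (hT : T ⊆ C \ {u}) :
    (H.oddComponentsIn ((C \ {u}) \ T)).ncard ≤ T.ncard := by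
  by_contra! hlt
  have huT : u ∉ T := fun h => (hT h).2 rfl
  have hWC : insert u T ⊆ C := Set.insert_subset hu (hT.trans Set.sdiff_subset)
  have hdisj : Disjoint S (insert u T) :=
    Set.disjoint_of_subset_right hWC (Set.subset_compl_iff_disjoint_left.mp hC.subset)
  have hstep := ncard_oddComponentsIn_add_le hC hWC
  rw [Set.sdiff_sdiff, Set.singleton_union] at hlt
  rw [show Sᶜ \ insert u T = (S ∪ insert u T)ᶜ by rw [Set.compl_union, Set.sdiff_eq]] at hstep
  have hcard : (S ∪ insert u T).ncard = S.ncard + T.ncard + 1 := by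
    rw [Set.ncard_union_eq hdisj, Set.ncard_insert_of_notMem huT, add_assoc]
  have hpar := (even_ncard_oddComponentsIn_compl_add_iff (H := H) (S ∪ insert u T)).mpr
    hS.prop.even_card
  rw [Nat.even_iff] at hpar
  have hSbar : (H.oddComponentsIn Sᶜ).ncard = S.ncard := hS.prop
  obtain ⟨Y, hSY, hY⟩ := exists_isBarrier_superset (H := H) hS.prop.even_card
    (X := S ∪ insert u T) (by omega)
  have huS : u ∈ S := hS.2 hY (Set.subset_union_left.trans hSY) (hSY (.inr (.inl rfl)))
  exact hC.subset hu huS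

end SimpleGraph

namespace Multigraph

variable {V E : Type} (G : Multigraph V E)

theorem theta_eq_ncard_oddComponentsIn (S : Set V) :
    G.theta S = (G.toSimple.oddComponentsIn Sᶜ).ncard := by
  simp_rw [theta, Nat.card_coe_set_eq]
  rw [← SimpleGraph.ncard_oddComponents_induce, ← Nat.card_coe_set_eq]
  rfl

theorem isBarrier_iff_toSimple (S : Set V) : G.IsBarrier S ↔ G.toSimple.IsBarrier S := by
  rw [IsBarrier, SimpleGraph.IsBarrier, theta_eq_ncard_oddComponentsIn, Nat.card_coe_set_eq]

theorem exists_isPerfectMatchingOn_of_isPerfectMatching {A : Set V}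
    {M : (G.toSimple.induce A).Subgraph} (hM : M.IsPerfectMatching) :
    ∃ M' : Set E, G.IsPerfectMatchingOn A M' := by
  have partner_eq (v : A) : ∃ w, M.Adj v w ∧
      ∀ a b, M.Adj a b → v.1 ∈ s(a.1, b.1) → s(a.1, b.1) = s(v.1, w.1) := by
    obtain ⟨w, hvw, huniq⟩ := SimpleGraph.Subgraph.isPerfectMatching_iff.mp hM v
    refine ⟨w, hvw, fun a b hab hv => ?_⟩
    rcases Sym2.mem_iff.mp hv with hva | hvb
    · obtain rfl : a = v := Subtype.ext hva.symm
      rw [huniq b hab]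
    · obtain rfl : b = v := Subtype.ext hvb.symm
      rw [huniq a hab.symm, Sym2.eq_swap]
  -- Parallel edges are resolved by matching only the representative `rangeSplitting` of each pair.
  refine ⟨Set.rangeSplitting G.ends ''
    {z | ∃ a b, M.Adj a b ∧ z.1 = s(a.1, b.1)}, ?_, fun v hv => ?_⟩
  · rintro _ ⟨z, ⟨a, b, -, hz⟩, rfl⟩ x hx
    rw [Set.apply_rangeSplitting G.ends, hz, Sym2.mem_iff] at hx
    rcases hx with rfl | rfl
    exacts [a.2, b.2]
  · obtain ⟨w, hvw, hpartner⟩ := partner_eq ⟨v, hv⟩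
    obtain ⟨-, e, he⟩ := M.adj_sub hvw
    refine ⟨Set.rangeSplitting G.ends ⟨s(v, w.1), e, he⟩,
      ⟨⟨_, ⟨⟨v, hv⟩, w, hvw, rfl⟩, rfl⟩, by simp [Set.apply_rangeSplitting]⟩, ?_⟩
    rintro _ ⟨⟨z, ⟨a, b, hab, hz⟩, rfl⟩, hvz⟩
    rw [Set.apply_rangeSplitting G.ends, hz] at hvz
    congr
    exact Subtype.ext (hz.trans (hpartner a b hab hvz))

end Multigraph

theorem maximal_barrier_components_factorCritical_general {V E : Type} [Fintype V]
    (G : Multigraph V E)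
    (S : Set V) (hS : G.IsBarrier S)
    (hmax : ∀ T : Set V, G.IsBarrier T → S ⊆ T → T = S) :
    ∀ c : (G.toSimple.induce Sᶜ).ConnectedComponent,
      ∀ u ∈ Subtype.val '' c.supp,
        ∃ M : Set E, G.IsPerfectMatchingOn (Subtype.val '' c.supp \ {u}) M := by
  intro c u hu
  have hSmax : Maximal G.toSimple.IsBarrier S :=
    ⟨(G.isBarrier_iff_toSimple S).mp hS,
      fun T hT hST => (hmax T ((G.isBarrier_iff_toSimple T).mpr hT) hST).le⟩
  obtain ⟨M, hM⟩ := SimpleGraph.exists_isPerfectMatching_induce fun T hT =>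
    (SimpleGraph.isComponentIn_image_supp c).ncard_oddComponentsIn_le_of_maximal_isBarrier
      hSmax hu hT
  exact G.exists_isPerfectMatchingOn_of_isPerfectMatching hM

/-- In a matching covered graph, every component of G − S, for a maximal
barrier S, is factor-critical. -/
theorem maximal_barrier_components_factorCritical {V E : Type} [Fintype V] [Fintype E]
    (G : Multigraph V E) (hconn : G.Connected)
    (hmc : ∀ e : E, ∃ M : Set E, G.IsPerfectMatching M ∧ e ∈ M)
    (S : Set V) (hS : G.IsBarrier S)
    (hmax : ∀ T : Set V, G.IsBarrier T → S ⊆ T → T = S) :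
    ∀ c : (G.toSimple.induce Sᶜ).ConnectedComponent,
      ∀ u ∈ Subtype.val '' c.supp,
        ∃ M : Set E, G.IsPerfectMatchingOn (Subtype.val '' c.supp \ {u}) M :=
  maximal_barrier_components_factorCritical_general G S hS hmax
end
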